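/- arXiv:2002.12529 — 10 statements merged into one kernel-verified Lean document; each statement's English description precedes it below -/
import Mathlib

section
/- If (x_n) is a sequence of integers with x_0 = 0, |x_{n+1} - x_n| ≤ 1 for all n, and x_n / n → ℓ as n → ∞, then r_n / n → |ℓ|, where r_n is the number of distinct values among x_0, x_1, ..., x_n. -/
/-!
The values visited up to time `n` form an integer interval, because the sequence cannot jump over
an integer. Hence `r n = M n + M' n + 1`, where `M` and `M'` are the running maxima of `x` and
`-x`. If `a n / n → ℓ` then the running maximum of `a` grows like `max ℓ 0 * n`, and
`max ℓ 0 + max (-ℓ) 0 = |ℓ|`.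
-/

open Filter Finset Topology

theorem exists_mem_Icc_eq_of_succ_le_add_one {x : ℕ → ℤ}
    (hstep : ∀ n, x (n + 1) ≤ x n + 1) {i j : ℕ} (hij : i ≤ j) {c : ℤ} (hi : x i ≤ c)
    (hj : c ≤ x j) : ∃ k ∈ Icc i j, x k = c := by
  induction j, hij using Nat.le_induction with
  | base => exact ⟨i, left_mem_Icc.2 le_rfl, le_antisymm hi hj⟩
  | succ j hij ih =>
    by_cases hc : c ≤ x j
    · obtain ⟨k, hk, hxk⟩ := ih hc
      exact ⟨k, Icc_subset_Icc_right j.le_succ hk, hxk⟩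
    · exact ⟨j + 1, right_mem_Icc.2 (hij.trans j.le_succ), by linarith [hstep j]⟩

theorem exists_mem_Icc_eq_of_le_succ_add_one {x : ℕ → ℤ}
    (hstep : ∀ n, x n ≤ x (n + 1) + 1) {i j : ℕ} (hij : i ≤ j) {c : ℤ} (hi : c ≤ x i)
    (hj : x j ≤ c) : ∃ k ∈ Icc i j, x k = c := by
  obtain ⟨k, hk, hxk⟩ := exists_mem_Icc_eq_of_succ_le_add_one (x := fun n => -x n)
    (fun n => by linarith [hstep n]) hij (c := -c) (neg_le_neg hi) (neg_le_neg hj)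
  exact ⟨k, hk, neg_inj.1 hxk⟩

theorem image_range_eq_Icc_of_abs_sub_le_one {x : ℕ → ℤ}
    (hstep : ∀ n, |x (n + 1) - x n| ≤ 1) (n : ℕ) :
    (range (n + 1)).image x =
      Icc ((range (n + 1)).inf' nonempty_range_add_one x)
        ((range (n + 1)).sup' nonempty_range_add_one x) := by
  ext c
  refine ⟨fun hc => ?_, fun hc => ?_⟩
  · obtain ⟨k, hk, rfl⟩ := mem_image.1 hc
    exact mem_Icc.2 ⟨inf'_le x hk, le_sup' x hk⟩
  obtain ⟨hlo, hhi⟩ := mem_Icc.1 hc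
  obtain ⟨i, hi, hxi⟩ := exists_mem_eq_inf' nonempty_range_add_one x
  obtain ⟨j, hj, hxj⟩ := exists_mem_eq_sup' nonempty_range_add_one x
  rw [hxi] at hlo
  rw [hxj] at hhi
  have hup : ∀ m, x (m + 1) ≤ x m + 1 := fun m => by linarith [(abs_le.1 (hstep m)).2]
  have hdown : ∀ m, x m ≤ x (m + 1) + 1 := fun m => by linarith [(abs_le.1 (hstep m)).1]
  obtain ⟨k, hk, hxk⟩ : ∃ k ∈ Icc (min i j) (max i j), x k = c := by
    rcases le_total i j with hij | hji
    · simpa [hij] using exists_mem_Icc_eq_of_succ_le_add_one hup hij hlo hhi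
    · simpa [hji] using exists_mem_Icc_eq_of_le_succ_add_one hdown hji hhi hlo
  refine mem_image.2 ⟨k, mem_range.2 ?_, hxk⟩
  have := (mem_Icc.1 hk).2
  rw [mem_range] at hi hj
  omega

theorem Finset.inf'_eq_neg_sup'_neg {ι α : Type*} [AddCommGroup α] [LinearOrder α]
    [IsOrderedAddMonoid α] {s : Finset ι} (H : s.Nonempty) (f : ι → α) :
    s.inf' H f = -s.sup' H fun i => -f i := by
  refine eq_of_forall_le_iff fun c => ?_
  simp [le_inf'_iff, le_neg, sup'_le_iff]

theorem card_image_range_of_abs_sub_le_one {x : ℕ → ℤ}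
    (hstep : ∀ n, |x (n + 1) - x n| ≤ 1) (n : ℕ) :
    (((range (n + 1)).image x).card : ℤ) =
      (range (n + 1)).sup' nonempty_range_add_one x +
        (range (n + 1)).sup' nonempty_range_add_one (fun k => -x k) + 1 := by
  have hle : (range (n + 1)).inf' nonempty_range_add_one x ≤
      (range (n + 1)).sup' nonempty_range_add_one x + 1 :=
    (inf'_le x (self_mem_range_succ n)).trans ((le_sup' x (self_mem_range_succ n)).trans
      (le_add_of_nonneg_right zero_le_one))
  rw [image_range_eq_Icc_of_abs_sub_le_one hstep, Int.card_Icc_of_le _ _ hle,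
    inf'_eq_neg_sup'_neg]
  ring

theorem Int.cast_finset_sup' {ι R : Type*} [Ring R] [LinearOrder R] [IsStrictOrderedRing R]
    {s : Finset ι} (H : s.Nonempty) (f : ι → ℤ) :
    ((s.sup' H f : ℤ) : R) = s.sup' H fun i => (f i : R) :=
  apply_sup'_eq_sup'_comp H _ fun _ _ => Int.cast_max

theorem eventually_forall_le_lt_mul_of_tendsto_div {a : ℕ → ℝ} {ℓ b : ℝ}
    (h : Tendsto (fun n : ℕ => a n / n) atTop (𝓝 ℓ)) (hℓb : ℓ < b) (hb : 0 < b) :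
    ∀ᶠ n : ℕ in atTop, ∀ k ≤ n, a k < b * n := by
  obtain ⟨N, hN⟩ :=
    eventually_atTop.1 ((h.eventually (gt_mem_nhds hℓb)).and (eventually_gt_atTop 0))
  have hearly : ∀ᶠ n : ℕ in atTop, ∀ k ∈ range N, a k < b * n :=
    (eventually_all_finset _).2 fun k _ =>
      (tendsto_natCast_atTop_atTop.const_mul_atTop hb).eventually_gt_atTop (a k)
  filter_upwards [hearly] with n hn k hk
  by_cases hkN : k < N
  · exact hn k (mem_range.2 hkN)
  · obtain ⟨hdiv, hk0⟩ := hN k (not_lt.1 hkN)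
    calc a k < b * k := (div_lt_iff₀ (by exact_mod_cast hk0)).1 hdiv
      _ ≤ b * n := by gcongr

theorem tendsto_sup'_range_div_of_tendsto_div {a : ℕ → ℝ} {ℓ : ℝ}
    (h : Tendsto (fun n : ℕ => a n / n) atTop (𝓝 ℓ)) :
    Tendsto (fun n : ℕ => (range (n + 1)).sup' nonempty_range_add_one a / n) atTop
      (𝓝 (max ℓ 0)) := by
  have hlow : Tendsto (fun n : ℕ => max (a n / n) (a 0 / n)) atTop (𝓝 (max ℓ 0)) :=
    h.max (tendsto_const_div_atTop_nhds_zero_nat (a 0))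
  refine tendsto_order.2 ⟨fun b hb => ?_, fun b hb => ?_⟩
  · filter_upwards [hlow.eventually (lt_mem_nhds hb)] with n hn
    refine hn.trans_le (max_le ?_ ?_) <;> gcongr <;> refine le_sup' a (mem_range.2 ?_) <;> omega
  · filter_upwards [eventually_forall_le_lt_mul_of_tendsto_div h ((le_max_left _ _).trans_lt hb)
      ((le_max_right _ _).trans_lt hb), eventually_gt_atTop 0] with n hn hn0
    rw [div_lt_iff₀ (by exact_mod_cast hn0)]
    exact (sup'_lt_iff _).2 fun k hk => hn k (mem_range_succ_iff.1 hk)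

theorem stmt0_general (x : ℕ → ℤ)
    (hinc : ∀ n, |x (n + 1) - x n| ≤ 1) (ℓ : ℝ)
    (hlim : Tendsto (fun n : ℕ => (x n : ℝ) / n) atTop (nhds ℓ)) :
    Tendsto (fun n : ℕ => (((Finset.range (n + 1)).image x).card : ℝ) / n)
      atTop (nhds |ℓ|) := by
  have hcard : ∀ n : ℕ, (((range (n + 1)).image x).card : ℝ) =
      (range (n + 1)).sup' nonempty_range_add_one (fun k => (x k : ℝ)) +
        (range (n + 1)).sup' nonempty_range_add_one (fun k => -(x k : ℝ)) + 1 := fun n => by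
    have := congrArg (Int.cast (R := ℝ)) (card_image_range_of_abs_sub_le_one hinc n)
    push_cast [Int.cast_finset_sup'] at this
    exact this
  have hneg : Tendsto (fun n : ℕ => -(x n : ℝ) / n) atTop (𝓝 (-ℓ)) := by
    simpa only [neg_div] using hlim.neg
  have hsum := ((tendsto_sup'_range_div_of_tendsto_div hlim).add
    (tendsto_sup'_range_div_of_tendsto_div hneg)).add tendsto_one_div_atTop_nhds_zero_nat
  rw [max_zero_add_max_neg_zero_eq_abs_self, add_zero] at hsum
  refine hsum.congr fun n => ?_
  rw [hcard, add_div, add_div]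

theorem stmt0 (x : ℕ → ℤ) (h0 : x 0 = 0)
    (hinc : ∀ n, |x (n + 1) - x n| ≤ 1) (ℓ : ℝ)
    (hlim : Tendsto (fun n : ℕ => (x n : ℝ) / n) atTop (nhds ℓ)) :
    Tendsto (fun n : ℕ => (((Finset.range (n + 1)).image x).card : ℝ) / n)
      atTop (nhds |ℓ|) :=
  stmt0_general x hinc ℓ hlim
end

section
/- Let (x_n) be an integer sequence with |x_{n+1} - x_n| ≤ m for a positive integer m, and suppose x_n / n → ℓ. Then |ℓ|/m ≤ liminf_{n→∞} r_n/n ≤ limsup_{n→∞} r_n/n ≤ min(1, |ℓ|), where r_n = card{x_0, ..., x_n}. -/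
open Filter Finset Topology

/-!
Write `r_n = valueCount x n`. Each time the walk reaches a new value, its distance to `x 0`
grows by at most `m`; hence `|x n - x 0| ≤ m r_n`, which gives the lower bound. Conversely,
`x k = ℓ k + o(n)` uniformly in `k ≤ n`, so `x 0, …, x n` lie in an interval of length
`|ℓ| n + o(n)` and `r_n ≤ |ℓ| n + o(n)`; trivially also `r_n ≤ n + 1`.
-/

def valueCount (x : ℕ → ℤ) (n : ℕ) : ℕ := #((range (n + 1)).image x)

theorem valueCount_le (x : ℕ → ℤ) (n : ℕ) : valueCount x n ≤ n + 1 :=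
  card_image_le.trans (card_range _).le

theorem valueCount_mono (x : ℕ → ℤ) : Monotone (valueCount x) := fun _ _ h =>
  card_le_card (image_subset_image (range_subset_range.2 (Nat.succ_le_succ h)))

theorem valueCount_succ_of_notMem {x : ℕ → ℤ} {n : ℕ} (h : x (n + 1) ∉ (range (n + 1)).image x) :
    valueCount x (n + 1) = valueCount x n + 1 := by
  rw [valueCount, range_add_one, image_insert, card_insert_of_notMem h, valueCount]

theorem abs_sub_le_valueCount_mul {x : ℕ → ℤ} {m : ℕ} (hinc : ∀ n, |x (n + 1) - x n| ≤ m)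
    (n : ℕ) : |x n - x 0| ≤ valueCount x n * m := by
  induction n using Nat.strong_induction_on with
  | _ n ih =>
  rcases n with _ | n
  · simp only [sub_self, abs_zero]; positivity
  by_cases hnew : x (n + 1) ∈ (range (n + 1)).image x
  · obtain ⟨j, hj, hxj⟩ := mem_image.1 hnew
    have hjn : j < n + 1 := mem_range.1 hj
    rw [← hxj]
    exact (ih j hjn).trans (by gcongr; exact valueCount_mono x hjn.le)
  · calc |x (n + 1) - x 0| ≤ |x (n + 1) - x n| + |x n - x 0| := abs_sub_le _ _ _
      _ ≤ m + valueCount x n * m := add_le_add (hinc n) (ih n n.lt_succ_self)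
      _ = valueCount x (n + 1) * m := by rw [valueCount_succ_of_notMem hnew]; push_cast; ring

theorem Finset.card_le_sub_add_one_of_forall_mem_Icc {s : Finset ℤ} (hs : s.Nonempty) {a b : ℝ}
    (h : ∀ z ∈ s, (z : ℝ) ∈ Set.Icc a b) : (#s : ℝ) ≤ b - a + 1 := by
  have hsub : s ⊆ Icc ⌈a⌉ ⌊b⌋ := fun z hz =>
    mem_Icc.2 ⟨Int.ceil_le.2 (h z hz).1, Int.le_floor.2 (h z hz).2⟩
  obtain ⟨z, hz⟩ := hs
  have hab : ⌈a⌉ ≤ ⌊b⌋ := (mem_Icc.1 (hsub hz)).1.trans (mem_Icc.1 (hsub hz)).2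
  calc (#s : ℝ) ≤ #(Icc ⌈a⌉ ⌊b⌋) := by exact_mod_cast card_le_card hsub
    _ = ⌊b⌋ + 1 - ⌈a⌉ := by
      rw [Int.card_Icc, ← Int.cast_natCast, Int.toNat_of_nonneg (by omega)]; push_cast; ring
    _ ≤ b - a + 1 := by linarith [Int.floor_le b, Int.le_ceil a]

theorem valueCount_le_of_forall_mem_Icc {x : ℕ → ℤ} {n : ℕ} {a b : ℝ}
    (h : ∀ k ≤ n, (x k : ℝ) ∈ Set.Icc a b) : (valueCount x n : ℝ) ≤ b - a + 1 :=
  card_le_sub_add_one_of_forall_mem_Icc (image_nonempty.2 nonempty_range_add_one)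
    (forall_mem_image.2 fun k hk => h k (Nat.lt_succ_iff.1 (mem_range.1 hk)))

theorem exists_abs_sub_mul_le_of_tendsto_div {y : ℕ → ℝ} {ℓ : ℝ}
    (h : Tendsto (fun n : ℕ => y n / n) atTop (𝓝 ℓ)) {ε : ℝ} (hε : 0 < ε) :
    ∃ C, ∀ k : ℕ, |y k - ℓ * k| ≤ ε * k + C := by
  obtain ⟨N, hN⟩ := Metric.tendsto_atTop.1 h ε hε
  refine ⟨∑ j ∈ range (N + 1), |y j - ℓ * j|, fun k => ?_⟩
  rcases le_or_gt k N with hk | hk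
  · have hεk : 0 ≤ ε * k := by positivity
    have := single_le_sum (f := fun j => |y j - ℓ * j|) (fun _ _ => abs_nonneg _)
      (mem_range.2 (Nat.lt_succ_of_le hk))
    linarith
  · have hk0 : (0 : ℝ) < k := by exact_mod_cast N.zero_le.trans_lt hk
    calc |y k - ℓ * k| = |y k / k - ℓ| * k := by
          rw [← abs_of_pos hk0, ← abs_mul, abs_of_pos hk0, sub_mul, div_mul_cancel₀ _ hk0.ne']
      _ ≤ ε * k := mul_le_mul_of_nonneg_right (hN k hk.le).le hk0.le
      _ ≤ ε * k + ∑ j ∈ range (N + 1), |y j - ℓ * j| := le_add_of_nonneg_right (by positivity)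

theorem exists_valueCount_le_of_tendsto_div {x : ℕ → ℤ} {ℓ : ℝ}
    (hlim : Tendsto (fun n : ℕ => (x n : ℝ) / n) atTop (𝓝 ℓ)) {ε : ℝ} (hε : 0 < ε) :
    ∃ C, ∀ n : ℕ, (valueCount x n : ℝ) ≤ (|ℓ| + ε) * n + C := by
  obtain ⟨C, hC⟩ := exists_abs_sub_mul_le_of_tendsto_div hlim (half_pos hε)
  refine ⟨2 * C + 1, fun n => ?_⟩
  have hn : (0 : ℝ) ≤ n := n.cast_nonneg
  have hbounds : ∀ k ≤ n,
      (x k : ℝ) ∈ Set.Icc (min 0 (ℓ * n) - ε / 2 * n - C) (max 0 (ℓ * n) + ε / 2 * n + C) := by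
    intro k hk
    have hkn : (k : ℝ) ≤ n := by exact_mod_cast hk
    have hk0 : (0 : ℝ) ≤ k := k.cast_nonneg
    have hxk := abs_le.1 (hC k)
    rcases le_total 0 ℓ with hℓ | hℓ
    · rw [min_eq_left (by positivity), max_eq_right (by positivity)]
      constructor <;> nlinarith
    · have hℓn : ℓ * n ≤ 0 := mul_nonpos_of_nonpos_of_nonneg hℓ hn
      rw [min_eq_right hℓn, max_eq_left hℓn]
      constructor <;> nlinarith
  have hwidth : max 0 (ℓ * n) - min 0 (ℓ * n) = |ℓ| * n := by
    rw [max_sub_min_eq_abs, sub_zero, abs_mul, abs_of_nonneg hn]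
  linarith [valueCount_le_of_forall_mem_Icc hbounds]

theorem limsup_le_of_eventually_le_of_tendsto {α : Type*} {f : Filter α} [f.NeBot]
    {u v : α → ℝ} {a : ℝ} (hu : IsBoundedUnder (· ≥ ·) f u) (huv : u ≤ᶠ[f] v)
    (hv : Tendsto v f (𝓝 a)) : limsup u f ≤ a :=
  hv.limsup_eq ▸ limsup_le_limsup huv hu.isCoboundedUnder_le hv.isBoundedUnder_le

theorem le_liminf_of_le_of_tendsto {α : Type*} {f : Filter α} [f.NeBot]
    {u v : α → ℝ} {a : ℝ} (hu : IsBoundedUnder (· ≤ ·) f u) (hvu : v ≤ᶠ[f] u)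
    (hv : Tendsto v f (𝓝 a)) : a ≤ liminf u f :=
  hv.liminf_eq ▸ liminf_le_liminf hvu hv.isBoundedUnder_ge hu.isCoboundedUnder_ge

theorem isBoundedUnder_ge_valueCount_div (x : ℕ → ℤ) :
    IsBoundedUnder (· ≥ ·) atTop fun n => (valueCount x n : ℝ) / n :=
  isBoundedUnder_of ⟨0, fun n => by positivity⟩

theorem valueCount_div_le_one_add (x : ℕ → ℤ) (n : ℕ) :
    (valueCount x n : ℝ) / n ≤ 1 + 1 / n :=
  calc (valueCount x n : ℝ) / n ≤ (n + 1) / n :=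
        div_le_div_of_nonneg_right (by exact_mod_cast valueCount_le x n) n.cast_nonneg
    _ ≤ 1 + 1 / n := by rw [add_div]; gcongr; exact div_self_le_one _

theorem abs_div_sub_div_le_valueCount_div {x : ℕ → ℤ} {m : ℕ}
    (hinc : ∀ n, |x (n + 1) - x n| ≤ m) (n : ℕ) :
    |(x n : ℝ) / n - x 0 / n| / m ≤ valueCount x n / n :=
  calc |(x n : ℝ) / n - x 0 / n| / m = |(x n : ℝ) - x 0| / m / n := by
        rw [← sub_div, abs_div, Nat.abs_cast, div_right_comm]
    _ ≤ valueCount x n / n := div_le_div_of_nonneg_right (div_le_of_le_mul₀ m.cast_nonneg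
        (Nat.cast_nonneg _) (by exact_mod_cast abs_sub_le_valueCount_mul hinc n)) n.cast_nonneg

theorem limsup_valueCount_div_le_abs {x : ℕ → ℤ} {ℓ : ℝ}
    (hlim : Tendsto (fun n : ℕ => (x n : ℝ) / n) atTop (𝓝 ℓ)) :
    limsup (fun n => (valueCount x n : ℝ) / n) atTop ≤ |ℓ| := by
  refine le_of_forall_pos_le_add fun ε hε => ?_
  obtain ⟨C, hC⟩ := exists_valueCount_le_of_tendsto_div hlim hε
  refine limsup_le_of_eventually_le_of_tendsto (isBoundedUnder_ge_valueCount_div x)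
    ((eventually_gt_atTop 0).mono fun n hn => ?_)
    (by simpa using (tendsto_const_div_atTop_nhds_zero_nat C).const_add (|ℓ| + ε))
  calc (valueCount x n : ℝ) / n ≤ ((|ℓ| + ε) * n + C) / n :=
        div_le_div_of_nonneg_right (hC n) n.cast_nonneg
    _ = |ℓ| + ε + C / n := by field_simp

theorem stmt2_general (x : ℕ → ℤ) (m : ℕ)
    (hinc : ∀ n, |x (n + 1) - x n| ≤ (m : ℤ)) (ℓ : ℝ)
    (hlim : Tendsto (fun n : ℕ => (x n : ℝ) / n) atTop (nhds ℓ)) :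
    |ℓ| / m ≤ liminf (fun n : ℕ => (((Finset.range (n + 1)).image x).card : ℝ) / n) atTop ∧
      liminf (fun n : ℕ => (((Finset.range (n + 1)).image x).card : ℝ) / n) atTop ≤
        limsup (fun n : ℕ => (((Finset.range (n + 1)).image x).card : ℝ) / n) atTop ∧
      limsup (fun n : ℕ => (((Finset.range (n + 1)).image x).card : ℝ) / n) atTop ≤
        min 1 |ℓ| := by
  have h_one : Tendsto (fun n : ℕ => 1 + 1 / (n : ℝ)) atTop (𝓝 1) := by
    simpa using tendsto_one_div_atTop_nhds_zero_nat.const_add (1 : ℝ)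
  have h_abs : Tendsto (fun n : ℕ => |(x n : ℝ) / n - x 0 / n| / m) atTop (𝓝 (|ℓ| / m)) := by
    simpa using (hlim.sub (tendsto_const_div_atTop_nhds_zero_nat (x 0 : ℝ))).abs.div_const (m : ℝ)
  have h_bdd_above : IsBoundedUnder (· ≤ ·) atTop fun n => (valueCount x n : ℝ) / n :=
    h_one.isBoundedUnder_le.mono_le (.of_forall (valueCount_div_le_one_add x))
  have h_bdd_below := isBoundedUnder_ge_valueCount_div x
  exact ⟨le_liminf_of_le_of_tendsto h_bdd_above
      (.of_forall (abs_div_sub_div_le_valueCount_div hinc)) h_abs,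
    liminf_le_limsup h_bdd_above h_bdd_below,
    le_min (limsup_le_of_eventually_le_of_tendsto h_bdd_below
      (.of_forall (valueCount_div_le_one_add x)) h_one) (limsup_valueCount_div_le_abs hlim)⟩

theorem stmt2 (x : ℕ → ℤ) (m : ℕ) (hm : 0 < m)
    (hinc : ∀ n, |x (n + 1) - x n| ≤ (m : ℤ)) (ℓ : ℝ)
    (hlim : Tendsto (fun n : ℕ => (x n : ℝ) / n) atTop (nhds ℓ)) :
    |ℓ| / m ≤ liminf (fun n : ℕ => (((Finset.range (n + 1)).image x).card : ℝ) / n) atTop ∧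
      liminf (fun n : ℕ => (((Finset.range (n + 1)).image x).card : ℝ) / n) atTop ≤
        limsup (fun n : ℕ => (((Finset.range (n + 1)).image x).card : ℝ) / n) atTop ∧
      limsup (fun n : ℕ => (((Finset.range (n + 1)).image x).card : ℝ) / n) atTop ≤
        min 1 |ℓ| :=
  stmt2_general x m hinc ℓ hlim
end

section
/- Let (x_n) be an integer sequence with |x_{n+1} - x_n| ≤ m for a positive integer m, and let r_n = card{x_0, ..., x_n}. The following are equivalent: (1) (max_{0 ≤ k ≤ n} |x_k|)/n → 0; (2) x_n/n → 0; (3) r_n/n → 0. -/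
/-! Past any `N` with `|x k| ≤ ε k` for `k ≥ N`, the running maximum satisfies
`M n ≤ M N + ε n`, so `M n / n → 0` as soon as `x n / n → 0`; the converse is trivial.
The visited values lie in `[-M n, M n]`, whence `r n ≤ 2 M n + 1`. Conversely, since steps
have size at most `m`, every integer between `x 0` and `x n` lies within `m` of a visited value,
so the `r n` windows of width `2m + 1` around them cover it: `|x n - x 0| < (2m + 1) r n`. -/

open Filter Finset Topology

section BoundedIncrements

variable {x : ℕ → ℤ} {m : ℕ}

theorem exists_abs_sub_le_of_mem_uIcc (hinc : ∀ n, |x (n + 1) - x n| ≤ m) {n : ℕ} {v : ℤ}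
    (hv : v ∈ uIcc (x 0) (x n)) : ∃ k ≤ n, |x k - v| ≤ m := by
  induction n with
  | zero => exact ⟨0, le_rfl, by simp_all [abs_le]⟩
  | succ n ih =>
    by_cases hvn : v ∈ uIcc (x 0) (x n)
    · obtain ⟨k, hk, hxk⟩ := ih hvn
      exact ⟨k, hk.trans n.le_succ, hxk⟩
    · -- `v` lies between `x n` and `x (n + 1)`, which are at most `m` apart
      refine ⟨n + 1, le_rfl, ?_⟩
      have := abs_le.1 (hinc n)
      rw [mem_uIcc] at hv hvn
      rw [abs_le]
      omega

theorem natAbs_sub_add_one_le_card_image_mul (hinc : ∀ n, |x (n + 1) - x n| ≤ m) (n : ℕ) :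
    (x n - x 0).natAbs + 1 ≤ #((range (n + 1)).image x) * (2 * m + 1) := by
  have hcover :
      uIcc (x 0) (x n) ⊆ ((range (n + 1)).image x).biUnion fun s => Icc (s - m) (s + m) := by
    intro v hv
    obtain ⟨k, hk, hxk⟩ := exists_abs_sub_le_of_mem_uIcc hinc hv
    rw [abs_le] at hxk
    exact mem_biUnion.2
      ⟨x k, mem_image_of_mem x (mem_range_succ_iff.2 hk), mem_Icc.2 (by omega)⟩
  calc (x n - x 0).natAbs + 1 = #(uIcc (x 0) (x n)) := (Int.card_uIcc _ _).symm
    _ ≤ #(((range (n + 1)).image x).biUnion (fun s => Icc (s - m) (s + m))) := card_le_card hcover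
    _ ≤ ∑ s ∈ (range (n + 1)).image x, #(Icc (s - m) (s + m)) := card_biUnion_le
    _ = #((range (n + 1)).image x) * (2 * m + 1) := by
      rw [sum_const_nat (m := 2 * m + 1) fun s _ => by rw [Int.card_Icc]; omega]

theorem abs_le_abs_add_mul_card_image (hinc : ∀ n, |x (n + 1) - x n| ≤ m) (n : ℕ) :
    |x n| ≤ |x 0| + (2 * m + 1) * #((range (n + 1)).image x) := by
  have h := natAbs_sub_add_one_le_card_image_mul hinc n
  zify at h
  linarith [abs_sub_abs_le_abs_sub (x n) (x 0)]

end BoundedIncrements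

theorem Int.card_le_two_mul_add_one_of_abs_le {s : Finset ℤ} {M : ℤ} (hM : 0 ≤ M)
    (hs : ∀ v ∈ s, |v| ≤ M) : (#s : ℤ) ≤ 2 * M + 1 := by
  have := card_le_card fun v hv => mem_Icc.2 (abs_le.1 (hs v hv))
  rw [Int.card_Icc] at this
  omega

theorem card_image_range_le_two_mul_sup'_abs_add_one (x : ℕ → ℤ) (n : ℕ) :
    (#((range (n + 1)).image x) : ℤ) ≤
      2 * (range (n + 1)).sup' nonempty_range_add_one (fun k => |x k|) + 1 := by
  refine Int.card_le_two_mul_add_one_of_abs_le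
    ((abs_nonneg _).trans (le_sup' (fun k => |x k|) (self_mem_range_succ n))) fun v hv => ?_
  obtain ⟨k, hk, rfl⟩ := mem_image.1 hv
  exact le_sup' (fun k => |x k|) hk

theorem tendsto_div_natCast_of_abs_le {a b : ℕ → ℝ} (C D : ℝ)
    (hab : ∀ n, |a n| ≤ C + D * b n) (hb : Tendsto (fun n => b n / n) atTop (𝓝 0)) :
    Tendsto (fun n => a n / n) atTop (𝓝 0) := by
  have hbound : Tendsto (fun n : ℕ => C / n + D * (b n / n)) atTop (𝓝 0) := by
    simpa using (tendsto_const_div_atTop_nhds_zero_nat C).add (hb.const_mul D)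
  refine squeeze_zero_norm (fun n => ?_) hbound
  rw [norm_div, Real.norm_natCast, Real.norm_eq_abs, mul_div_assoc', ← add_div]
  gcongr
  exact hab n

theorem tendsto_sup'_abs_div_of_tendsto {a : ℕ → ℝ}
    (h : Tendsto (fun n => a n / n) atTop (𝓝 0)) :
    Tendsto (fun n : ℕ => (range (n + 1)).sup' nonempty_range_add_one (fun k => |a k|) / n)
      atTop (𝓝 0) := by
  set M := fun n : ℕ => (range (n + 1)).sup' nonempty_range_add_one (fun k => |a k|)
  have hM_nonneg : ∀ n, 0 ≤ M n := fun n =>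
    (abs_nonneg (a 0)).trans (le_sup' (fun k => |a k|) (mem_range.2 n.succ_pos))
  refine tendsto_order.2
    ⟨fun c hc => Eventually.of_forall fun n => hc.trans_le ?_, fun ε hε => ?_⟩
  · exact div_nonneg (hM_nonneg n) n.cast_nonneg
  obtain ⟨N, hN⟩ :=
    eventually_atTop.1 ((tendsto_order.1 h.abs).2 (ε / 2) (by simpa using half_pos hε))
  have hM_le : ∀ n ≥ N, M n ≤ M N + ε / 2 * n := by
    intro n hn
    refine sup'_le _ _ fun k hkn => ?_
    rcases le_or_gt k N with hkN | hNk
    · have := le_sup' (fun k => |a k|) (mem_range_succ_iff.2 hkN)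
      have : 0 ≤ ε / 2 * n := by positivity
      linarith
    · have hk : (0 : ℝ) < k := by exact_mod_cast (N.zero_le.trans_lt hNk)
      have := hN k hNk.le
      rw [abs_div, Nat.abs_cast, div_lt_iff₀ hk] at this
      have : ε / 2 * k ≤ ε / 2 * n := by gcongr; exact mem_range_succ_iff.1 hkn
      linarith [hM_nonneg N]
  have hMN :=
    (tendsto_order.1 (tendsto_const_div_atTop_nhds_zero_nat (M N))).2 (ε / 2) (half_pos hε)
  filter_upwards [hMN, eventually_ge_atTop (max N 1)] with n hMNn hn
  have hn0 : (0 : ℝ) < n := by exact_mod_cast (le_of_max_le_right hn)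
  calc M n / n ≤ (M N + ε / 2 * n) / n := by gcongr; exact hM_le n (le_of_max_le_left hn)
    _ = M N / n + ε / 2 := by field_simp
    _ < ε := by linarith

theorem intCast_sup'_range_abs (x : ℕ → ℤ) (n : ℕ) :
    (((range (n + 1)).sup' nonempty_range_add_one (fun k => |x k|) : ℤ) : ℝ) =
      (range (n + 1)).sup' nonempty_range_add_one (fun k => |(x k : ℝ)|) := by
  rw [apply_sup'_eq_sup'_comp _ _ fun a b => Int.cast_max (a := a) (b := b)]
  simp only [Function.comp_def, Int.cast_abs]

theorem stmt3_general (x : ℕ → ℤ) (m : ℕ)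
    (hinc : ∀ n, |x (n + 1) - x n| ≤ (m : ℤ)) :
    (Tendsto (fun n : ℕ =>
        (((Finset.range (n + 1)).sup' ⟨0, Finset.mem_range.mpr n.succ_pos⟩
          (fun k => |x k|) : ℤ) : ℝ) / n) atTop (nhds 0) ↔
      Tendsto (fun n : ℕ => (x n : ℝ) / n) atTop (nhds 0)) ∧
    (Tendsto (fun n : ℕ => (x n : ℝ) / n) atTop (nhds 0) ↔
      Tendsto (fun n : ℕ => (((Finset.range (n + 1)).image x).card : ℝ) / n)
        atTop (nhds 0)) := by
  set M : ℕ → ℤ := fun n => (range (n + 1)).sup' nonempty_range_add_one (fun k => |x k|)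
  have hxM : ∀ n, |(x n : ℝ)| ≤ 0 + 1 * (M n : ℝ) := fun n => by
    simpa [← Int.cast_abs] using le_sup' (fun k => |x k|) (self_mem_range_succ n)
  have hrM : ∀ n, |(#((range (n + 1)).image x) : ℝ)| ≤ 1 + 2 * (M n : ℝ) := fun n => by
    rw [Nat.abs_cast, add_comm (1 : ℝ)]
    exact_mod_cast card_image_range_le_two_mul_sup'_abs_add_one x n
  have hxr : ∀ n,
      |(x n : ℝ)| ≤ |(x 0 : ℝ)| + (2 * m + 1) * (#((range (n + 1)).image x) : ℝ) := fun n => by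
    exact_mod_cast abs_le_abs_add_mul_card_image hinc n
  have hMx : Tendsto (fun n => (x n : ℝ) / n) atTop (𝓝 0) →
      Tendsto (fun n => (M n : ℝ) / n) atTop (𝓝 0) := fun h => by
    simpa only [M, intCast_sup'_range_abs] using tendsto_sup'_abs_div_of_tendsto h
  exact ⟨⟨tendsto_div_natCast_of_abs_le _ _ hxM, hMx⟩,
    ⟨fun h => tendsto_div_natCast_of_abs_le _ _ hrM (hMx h),
      tendsto_div_natCast_of_abs_le _ _ hxr⟩⟩

theorem stmt3 (x : ℕ → ℤ) (m : ℕ) (hm : 0 < m)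
    (hinc : ∀ n, |x (n + 1) - x n| ≤ (m : ℤ)) :
    (Tendsto (fun n : ℕ =>
        (((Finset.range (n + 1)).sup' ⟨0, Finset.mem_range.mpr n.succ_pos⟩
          (fun k => |x k|) : ℤ) : ℝ) / n) atTop (nhds 0) ↔
      Tendsto (fun n : ℕ => (x n : ℝ) / n) atTop (nhds 0)) ∧
    (Tendsto (fun n : ℕ => (x n : ℝ) / n) atTop (nhds 0) ↔
      Tendsto (fun n : ℕ => (((Finset.range (n + 1)).image x).card : ℝ) / n)
        atTop (nhds 0)) :=
  stmt3_general x m hinc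
end

section
/- Define x_k piecewise by: for τ_{n-1} ≤ k < t_n, x_k = k - τ_{n-1}, and for t_n ≤ k < τ_n, x_k = τ_n - k, where τ_n = 2·3^n (with τ_{-1} = 0) and t_n = (τ_n + τ_{n-1})/2. Then (x_n) is an integer sequence with x_0 = 0, |x_{k+1} - x_k| ≤ 1 for all k, x_{τ_n} = 0 for all n (so x hits 0 infinitely often), and limsup_{n→∞} x_n/n ≥ 1/2. -/
/-!
On the block `[τ_{n-1}, τ_n)` the sequence is a tent rising with slope `1` from `0` and falling
back to `0` at `τ_n`, so it has unit increments and vanishes at every `τ_n`. Its peak sits at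
`t_n = 4·3^(n-1)` with height `2·3^(n-1)`, so `x_{t_n} / t_n = 1/2` along the subsequence `t_n`,
while `x_k ≤ k` keeps the ratios bounded above.
-/

open Filter

/-- τ_{-1} = 0 shifted by one: `tauSeq 0 = 0` and `tauSeq (n+1) = 2 * 3 ^ n`,
so `tauSeq (n+1)` is the τ_n = 2·3^n of the paper. -/
def tauSeq (n : ℕ) : ℕ := if n = 0 then 0 else 2 * 3 ^ (n - 1)

/-- Index of the block `[tauSeq n, tauSeq (n+1))` containing `k`. -/
def blk (k : ℕ) : ℕ := Nat.findGreatest (fun n => tauSeq n ≤ k) k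

/-- The explicit tent-shaped sequence: on the block `[τ_{n-1}, τ_n)` it equals
`k - τ_{n-1}` for `k < t_n = (τ_{n-1} + τ_n)/2` and `τ_n - k` for `k ≥ t_n`. -/
def xseq (k : ℕ) : ℤ := min ((k : ℤ) - (tauSeq (blk k) : ℤ)) ((tauSeq (blk k + 1) : ℤ) - k)

lemma tauSeq_succ (n : ℕ) : tauSeq (n + 1) = 2 * 3 ^ n := by simp [tauSeq]

lemma tauSeq_lt_succ (n : ℕ) : tauSeq n < tauSeq (n + 1) := by
  cases n with
  | zero => simp [tauSeq]
  | succ m =>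
    rw [tauSeq_succ, tauSeq_succ, pow_succ]
    have := Nat.pow_pos (n := m) (by norm_num : 0 < 3)
    omega

lemma tauSeq_strictMono : StrictMono tauSeq :=
  strictMono_nat_of_lt_succ tauSeq_lt_succ

lemma self_le_tauSeq (n : ℕ) : n ≤ tauSeq n := by
  cases n with
  | zero => simp [tauSeq]
  | succ m =>
    rw [tauSeq_succ]
    have := Nat.lt_pow_self (n := m) (by norm_num : 1 < 3)
    omega

lemma blk_spec (k : ℕ) : tauSeq (blk k) ≤ k ∧ k < tauSeq (blk k + 1) := by
  refine ⟨Nat.findGreatest_spec (P := fun n => tauSeq n ≤ k) (Nat.zero_le k)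
    (by simp [tauSeq]), ?_⟩
  by_contra! h
  have : blk k + 1 ≤ blk k := Nat.le_findGreatest ((self_le_tauSeq _).trans h) h
  omega

lemma blk_eq {n k : ℕ} (h₁ : tauSeq n ≤ k) (h₂ : k < tauSeq (n + 1)) : blk k = n := by
  refine le_antisymm ?_ (Nat.le_findGreatest ((self_le_tauSeq n).trans h₁) h₁)
  by_contra! h
  have : tauSeq (n + 1) ≤ tauSeq (blk k) := tauSeq_strictMono.monotone h
  have := (blk_spec k).1
  omega

lemma xseq_eq_of_mem_block {n k : ℕ} (h₁ : tauSeq n ≤ k) (h₂ : k < tauSeq (n + 1)) :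
    xseq k = min ((k : ℤ) - tauSeq n) ((tauSeq (n + 1) : ℤ) - k) := by
  rw [xseq, blk_eq h₁ h₂]

lemma xseq_tauSeq (n : ℕ) : xseq (tauSeq n) = 0 := by
  have := tauSeq_lt_succ n
  rw [xseq_eq_of_mem_block le_rfl this]
  omega

lemma xseq_le_self (k : ℕ) : xseq k ≤ k := by
  rw [xseq]
  omega

lemma abs_xseq_succ_sub_le_one (k : ℕ) : |xseq (k + 1) - xseq k| ≤ 1 := by
  obtain ⟨h₁, h₂⟩ := blk_spec k
  rw [xseq_eq_of_mem_block h₁ h₂, abs_le]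
  rcases Nat.lt_or_ge (k + 1) (tauSeq (blk k + 1)) with h | h
  · rw [xseq_eq_of_mem_block (h₁.trans k.le_succ) h]
    omega
  · -- `k + 1` starts the next block, where the sequence is back at `0`
    have hk : k + 1 = tauSeq (blk k + 1) := by omega
    rw [hk, xseq_tauSeq]
    omega

lemma xseq_four_mul_three_pow (m : ℕ) : xseq (4 * 3 ^ m) = 2 * 3 ^ m := by
  have h₁ : tauSeq (m + 1) ≤ 4 * 3 ^ m := by rw [tauSeq_succ]; omega
  have h₂ : 4 * 3 ^ m < tauSeq (m + 2) := by
    rw [tauSeq_succ, pow_succ]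
    have := Nat.pow_pos (n := m) (by norm_num : 0 < 3)
    omega
  rw [xseq_eq_of_mem_block h₁ h₂, tauSeq_succ, tauSeq_succ, pow_succ]
  push_cast
  omega

lemma one_half_le_limsup_xseq_div :
    (1 / 2 : ℝ) ≤ limsup (fun n : ℕ => (xseq n : ℝ) / n) atTop := by
  apply le_limsup_of_frequently_le
  · refine frequently_atTop.2 fun a => ⟨4 * 3 ^ a, ?_, ?_⟩
    · have := Nat.lt_pow_self (n := a) (by norm_num : 1 < 3)
      omega
    · rw [xseq_four_mul_three_pow]
      push_cast
      field_simp
      norm_num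
  · refine isBoundedUnder_of ⟨1, fun n => ?_⟩
    rcases Nat.eq_zero_or_pos n with rfl | hn
    · simp
    · rw [div_le_one (by exact_mod_cast hn)]
      exact_mod_cast xseq_le_self n

theorem stmt5 :
    xseq 0 = 0 ∧
    (∀ k, |xseq (k + 1) - xseq k| ≤ 1) ∧
    (∀ n, xseq (2 * 3 ^ n) = 0) ∧
    (∀ N, ∃ k > N, xseq k = 0) ∧
    (1 / 2 : ℝ) ≤ limsup (fun n : ℕ => (xseq n : ℝ) / n) atTop := by
  have hzero (n : ℕ) : xseq (2 * 3 ^ n) = 0 := by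
    rw [← tauSeq_succ]
    exact xseq_tauSeq _
  refine ⟨xseq_tauSeq 0, abs_xseq_succ_sub_le_one, hzero, fun N => ?_,
    one_half_le_limsup_xseq_div⟩
  exact ⟨tauSeq (N + 1), (self_le_tauSeq _).trans_lt' N.lt_succ_self, xseq_tauSeq _⟩
end

section
/- Let (x_n) be an integer sequence with x_0 = 0, |x_{n+1} - x_n| ≤ 1 for all n, which hits 0 at an infinite increasing sequence of times τ_0 < τ_1 < τ_2 < ... (i.e., x_{τ_k} = 0 for all k, and these are the zeros of x). Then limsup_{n→∞} |x_n|/n ≤ limsup_{k→∞} (1/2)(τ_k/τ_{k-1} - 1). -/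
/-!
If `τ_k ≤ n < τ_{k+1}` are the zeros of `x` enclosing `n`, the increments bound give
`|x_n| ≤ n - τ_k` and `|x_n| ≤ τ_{k+1} - n`, hence `2 |x_n| ≤ τ_{k+1} - τ_k` and, as `n ≥ τ_k`,
`|x_n| / n ≤ (τ_{k+1} / τ_k - 1) / 2`. The index `k` of the last zero up to `n` tends to infinity
with `n`, so the limsup over `n` is at most the limsup over `k`.
-/

open Filter

theorem abs_sub_le_of_abs_sub_succ_le_one {f : ℕ → ℤ} (hf : ∀ n, |f (n + 1) - f n| ≤ 1)
    {m n : ℕ} (hmn : m ≤ n) : |f n - f m| ≤ n - m := by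
  induction n, hmn using Nat.le_induction with
  | base => simp
  | succ n _ ih =>
    calc |f (n + 1) - f m| ≤ |f (n + 1) - f n| + |f n - f m| := abs_sub_le _ _ _
      _ ≤ 1 + (n - m) := add_le_add (hf n) ih
      _ = ((n + 1 : ℕ) : ℤ) - m := by push_cast; ring

theorem two_mul_abs_le_of_eq_zero_of_eq_zero {f : ℕ → ℤ} (hf : ∀ n, |f (n + 1) - f n| ≤ 1)
    {a b n : ℕ} (ha : f a = 0) (hb : f b = 0) (han : a ≤ n) (hnb : n ≤ b) :
    2 * |f n| ≤ b - a := by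
  have h₁ := abs_sub_le_of_abs_sub_succ_le_one hf han
  have h₂ := abs_sub_le_of_abs_sub_succ_le_one hf hnb
  rw [ha, sub_zero] at h₁
  rw [hb, zero_sub, abs_neg] at h₂
  omega

/-- For strictly monotone `τ`, the greatest `k` with `τ k ≤ n`; junk value `0` when `n < τ 0`. -/
def lastIndexLE (τ : ℕ → ℕ) (n : ℕ) : ℕ := Nat.findGreatest (fun k => τ k ≤ n) n

namespace lastIndexLE

variable {τ : ℕ → ℕ}

theorem apply_le {n : ℕ} (hn : τ 0 ≤ n) : τ (lastIndexLE τ n) ≤ n :=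
  Nat.findGreatest_spec (P := fun k => τ k ≤ n) (Nat.zero_le n) hn

theorem le_of_apply_le (hτ : StrictMono τ) {k n : ℕ} (hkn : τ k ≤ n) : k ≤ lastIndexLE τ n :=
  Nat.le_findGreatest (hτ.le_apply.trans hkn) hkn

theorem lt_apply_succ (hτ : StrictMono τ) (n : ℕ) : n < τ (lastIndexLE τ n + 1) := by
  by_contra! h
  have := le_of_apply_le hτ h
  omega

theorem tendsto_atTop (hτ : StrictMono τ) : Tendsto (lastIndexLE τ) atTop atTop :=
  tendsto_atTop_atTop.2 fun k => ⟨τ k, fun _ hn => le_of_apply_le hτ hn⟩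

end lastIndexLE

theorem abs_div_le_half_ratio_sub_one {x : ℕ → ℤ} (hinc : ∀ n, |x (n + 1) - x n| ≤ 1)
    {τ : ℕ → ℕ} (hτ : StrictMono τ) (hzero : ∀ k, x (τ k) = 0) {n : ℕ} (hn : τ 1 ≤ n) :
    ((|x n| : ℤ) : ℝ) / n ≤
      1 / 2 * ((τ (lastIndexLE τ n + 1) : ℝ) / τ (lastIndexLE τ n) - 1) := by
  set k := lastIndexLE τ n
  have hk : τ k ≤ n := lastIndexLE.apply_le ((hτ.monotone (Nat.zero_le 1)).trans hn)
  have hτk : 0 < (τ k : ℝ) := by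
    have h1k : τ 1 ≤ τ k := hτ.monotone (lastIndexLE.le_of_apply_le hτ hn)
    have h01 : τ 0 < τ 1 := hτ zero_lt_one
    exact_mod_cast (show 0 < τ k by omega)
  have hgap : 2 * ((|x n| : ℤ) : ℝ) ≤ τ (k + 1) - τ k := by
    exact_mod_cast two_mul_abs_le_of_eq_zero_of_eq_zero hinc (hzero k) (hzero (k + 1)) hk
      (lastIndexLE.lt_apply_succ hτ n).le
  calc ((|x n| : ℤ) : ℝ) / n ≤ ((|x n| : ℤ) : ℝ) / τ k :=
        div_le_div_of_nonneg_left (by positivity) hτk (by exact_mod_cast hk)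
    _ ≤ (τ (k + 1) - τ k) / (2 * τ k) := by
        rw [div_le_div_iff₀ hτk (by positivity)]
        nlinarith
    _ = 1 / 2 * ((τ (k + 1) : ℝ) / τ k - 1) := by field_simp

theorem stmt7_general (x : ℕ → ℤ)
    (hinc : ∀ n, |x (n + 1) - x n| ≤ 1)
    (τ : ℕ → ℕ) (hmono : StrictMono τ)
    (hzero : ∀ k, x (τ k) = 0) :
    limsup (fun n : ℕ => (((|x n| : ℤ) : ℝ) / n : EReal)) atTop ≤
      limsup (fun k : ℕ =>
        (((1 / 2 : ℝ) * ((τ (k + 1) : ℝ) / (τ k : ℝ) - 1) : ℝ) : EReal)) atTop := by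
  set g : ℕ → EReal := fun k => (((1 / 2 : ℝ) * ((τ (k + 1) : ℝ) / (τ k : ℝ) - 1) : ℝ) : EReal)
  have hbound : ∀ᶠ n in atTop,
      (((|x n| : ℤ) : ℝ) / n : EReal) ≤ (g ∘ lastIndexLE τ) n := by
    filter_upwards [eventually_ge_atTop (τ 1)] with n hn
    rw [← EReal.coe_coe_eq_natCast, ← EReal.coe_div, Function.comp_apply, EReal.coe_le_coe_iff]
    exact abs_div_le_half_ratio_sub_one hinc hmono hzero hn
  exact (limsup_le_limsup hbound).trans
    (lastIndexLE.tendsto_atTop hmono).limsup_comp_le_limsup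

theorem stmt7 (x : ℕ → ℤ) (h0 : x 0 = 0)
    (hinc : ∀ n, |x (n + 1) - x n| ≤ 1)
    (τ : ℕ → ℕ) (hmono : StrictMono τ)
    (hzero : ∀ k, x (τ k) = 0)
    (hall : ∀ n, x n = 0 → ∃ k, τ k = n) :
    limsup (fun n : ℕ => (((|x n| : ℤ) : ℝ) / n : EReal)) atTop ≤
      limsup (fun k : ℕ =>
        (((1 / 2 : ℝ) * ((τ (k + 1) : ℝ) / (τ k : ℝ) - 1) : ℝ) : EReal)) atTop :=
  stmt7_general x hinc τ hmono hzero
end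

section
/- Let (x_n) be an integer sequence with |x_{n+1} - x_n| ≤ 1 for all n, hitting 0 at infinitely many times τ_0 < τ_1 < ... . If τ_k/τ_{k-1} → 1 as k → ∞, then x_n/n → 0. -/
/-!
If `τ k ≤ n < τ (k + 1)`, the walk needs at least `|x n|` steps to get from `x (τ k) = 0` to `x n`,
so `|x n| ≤ n - τ k < τ (k + 1) - τ k`, and the ratio hypothesis makes this gap `o(τ k) = o(n)`.
-/

open Filter

theorem dist_le_mul_of_dist_succ_le {α : Type*} [PseudoMetricSpace α] {f : ℕ → α} {C : ℝ}
    (hf : ∀ n, dist (f n) (f (n + 1)) ≤ C) {m n : ℕ} (hmn : m ≤ n) :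
    dist (f m) (f n) ≤ (n - m : ℕ) * C := by
  simpa using dist_le_Ico_sum_of_dist_le hmn (d := fun _ => C) fun {k} _ _ => hf k

theorem StrictMono.exists_le_lt_succ {τ : ℕ → ℕ} (hτ : StrictMono τ) {n : ℕ} (hn : τ 0 ≤ n) :
    ∃ k, τ k ≤ n ∧ n < τ (k + 1) := by
  obtain ⟨k, hk, hk'⟩ := hτ.exists_between_of_tendsto_atTop hτ.tendsto_atTop (Nat.lt_succ_of_le hn)
  exact ⟨k, Nat.le_of_lt_succ hk, hk'⟩

theorem StrictMono.eventually_exists_sub_lt_mul {τ : ℕ → ℕ} (hτ : StrictMono τ)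
    (hratio : Tendsto (fun k : ℕ => (τ (k + 1) : ℝ) / (τ k : ℝ)) atTop (nhds 1))
    {ε : ℝ} (hε : 0 < ε) :
    ∀ᶠ n : ℕ in atTop, ∃ k, τ k ≤ n ∧ (n : ℝ) - τ k < ε * n := by
  obtain ⟨K, hK⟩ := eventually_atTop.1 <|
    (hratio.eventually (gt_mem_nhds (lt_add_of_pos_right 1 hε))).and (eventually_gt_atTop 0)
  filter_upwards [eventually_ge_atTop (τ K)] with n hn
  obtain ⟨k, hkn, hnk⟩ := hτ.exists_le_lt_succ ((hτ.monotone K.zero_le).trans hn)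
  have hKk : K ≤ k := by
    by_contra! h
    exact (hnk.trans_le (hτ.monotone h)).not_ge hn
  obtain ⟨hgap, hk⟩ := hK k hKk
  have hτk : (0 : ℝ) < τ k := by exact_mod_cast (Nat.zero_le _).trans_lt (hk.trans_le hτ.le_apply)
  rw [div_lt_iff₀ hτk] at hgap
  refine ⟨k, hkn, ?_⟩
  have hnk' : (n : ℝ) < τ (k + 1) := by exact_mod_cast hnk
  have hkn' : (τ k : ℝ) ≤ n := by exact_mod_cast hkn
  linarith [mul_le_mul_of_nonneg_left hkn' hε.le]

theorem stmt8 (x : ℕ → ℤ)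
    (hinc : ∀ n, |x (n + 1) - x n| ≤ 1)
    (τ : ℕ → ℕ) (hmono : StrictMono τ)
    (hzero : ∀ k, x (τ k) = 0)
    (hratio : Tendsto (fun k : ℕ => (τ (k + 1) : ℝ) / (τ k : ℝ)) atTop (nhds 1)) :
    Tendsto (fun n : ℕ => (x n : ℝ) / n) atTop (nhds 0) := by
  have hstep (n : ℕ) : dist (x n : ℝ) (x (n + 1)) ≤ 1 := by
    rw [Int.dist_cast_real, dist_comm, Int.dist_eq]; exact_mod_cast hinc n
  refine Metric.tendsto_nhds.2 fun ε hε => ?_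
  filter_upwards [hmono.eventually_exists_sub_lt_mul hratio hε, eventually_gt_atTop 0]
    with n ⟨k, hkn, hgap⟩ hn
  have hxn : |(x n : ℝ)| ≤ n - τ k := by
    simpa [hzero k, Real.dist_eq, abs_sub_comm, hkn] using dist_le_mul_of_dist_succ_le hstep hkn
  rw [Real.dist_eq, sub_zero, abs_div, Nat.abs_cast, div_lt_iff₀ (by exact_mod_cast hn)]
  linarith
end

section
/- Let (ξ_n)_{n≥1} be a stationary ergodic sequence of random variables taking values in {-1, 0, 1}, and define X_0 = 0, X_n = ξ_1 + ... + ξ_n, and R_n = card{X_0, ..., X_n}. Then almost surely R_n/n → |E(ξ_1)|. -/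
/-!
By Birkhoff's ergodic theorem `X n / n → ℓ := E ξ₁` almost surely, so it suffices to show that a
walk `x` on `ℤ` with steps in `{-1, 0, 1}` and `x n / n → ℓ` visits `r n ~ |ℓ| n` sites by time
`n`. Since the walk cannot jump over a site, it visits every integer between `x 0` and `x n`,
whence `r n > |x n - x 0|`; and `x 0, …, x n` all lie in an interval of length
`|ℓ| n + 2 max_{k ≤ n} |x k - ℓ k| = |ℓ| n + o(n)`.

Birkhoff's theorem for a bounded observable `g`: the event `limsup S_n / n ≥ q` is invariant,
hence trivial, and if it had full measure for some `q > ∫ g`, the maximal ergodic theorem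
applied to `g - r` with `∫ g < r < q` would give `∫ g ≥ r`.
-/

open Filter MeasureTheory Finset Topology

theorem exists_eq_of_le_of_le_of_forall_le_add_one {x : ℕ → ℤ} (hx : ∀ k, x (k + 1) ≤ x k + 1)
    {n : ℕ} {c : ℤ} (h0 : x 0 ≤ c) (hn : c ≤ x n) : ∃ k ≤ n, x k = c := by
  induction n with
  | zero => exact ⟨0, le_rfl, le_antisymm h0 hn⟩
  | succ n ih =>
    rcases le_or_gt c (x n) with hc | hc
    · obtain ⟨k, hk, rfl⟩ := ih hc
      exact ⟨k, by omega, rfl⟩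
    · exact ⟨n + 1, le_rfl, by linarith [hx n]⟩

theorem Icc_subset_image_range {x : ℕ → ℤ} (hx : ∀ k, |x (k + 1) - x k| ≤ 1) (n : ℕ) :
    Icc (min (x 0) (x n)) (max (x 0) (x n)) ⊆ (range (n + 1)).image x := by
  intro c hc
  rw [mem_Icc] at hc
  suffices ∃ k ≤ n, x k = c by
    obtain ⟨k, hk, rfl⟩ := this
    exact mem_image_of_mem x (mem_range.2 (by omega))
  rcases le_total (x 0) (x n) with h | h
  · exact exists_eq_of_le_of_le_of_forall_le_add_one (fun k => by linarith [(abs_le.1 (hx k)).2])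
      (by omega) (by omega)
  · obtain ⟨k, hk, hkc⟩ := exists_eq_of_le_of_le_of_forall_le_add_one (x := fun k => -x k)
      (fun k => by linarith [(abs_le.1 (hx k)).1]) (n := n) (c := -c) (by omega) (by omega)
    exact ⟨k, hk, by omega⟩

theorem abs_sub_lt_card_image_range {x : ℕ → ℤ} (hx : ∀ k, |x (k + 1) - x k| ≤ 1) (n : ℕ) :
    |x n - x 0| < ((range (n + 1)).image x).card := by
  have := card_le_card (Icc_subset_image_range hx n)
  rw [Int.card_Icc] at this
  exact abs_lt.2 ⟨by omega, by omega⟩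

theorem card_image_range_le {x : ℕ → ℤ} {n : ℕ} {ℓ E : ℝ}
    (hE : ∀ k ≤ n, |x k - ℓ * k| ≤ E) :
    (((range (n + 1)).image x).card : ℝ) ≤ |ℓ| * n + 2 * E + 1 := by
  obtain ⟨i, hi, hmin⟩ := exists_min_image (range (n + 1)) x nonempty_range_add_one
  obtain ⟨j, hj, hmax⟩ := exists_max_image (range (n + 1)) x nonempty_range_add_one
  have hsub : (range (n + 1)).image x ⊆ Icc (x i) (x j) := by
    simp only [subset_iff, mem_image, mem_Icc]
    rintro _ ⟨k, hk, rfl⟩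
    exact ⟨hmin k hk, hmax k hk⟩
  have hcard : (((range (n + 1)).image x).card : ℤ) ≤ x j - x i + 1 := by
    have := card_le_card hsub
    rw [Int.card_Icc] at this
    have := hmin j hj
    omega
  rw [mem_range_succ_iff] at hi hj
  have hdrift : ℓ * (j - i) ≤ |ℓ| * n := by
    have : |(j : ℝ) - i| ≤ n := abs_sub_le_of_nonneg_of_le (by positivity)
      (by exact_mod_cast hj) (by positivity) (by exact_mod_cast hi)
    exact (le_abs_self _).trans ((abs_mul ℓ _).trans_le (by gcongr))
  have hcardR : (((range (n + 1)).image x).card : ℝ) ≤ x j - x i + 1 := by exact_mod_cast hcard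
  linarith [(abs_le.1 (hE i hi)).1, (abs_le.1 (hE j hj)).2]

theorem tendsto_sup'_range_div_atTop {a : ℕ → ℝ} (ha : Tendsto (fun n => a n / n) atTop (𝓝 0)) :
    Tendsto (fun n => (range (n + 1)).sup' nonempty_range_add_one a / n) atTop (𝓝 0) := by
  set M := fun n => (range (n + 1)).sup' nonempty_range_add_one a
  have hM : ∀ {ε : ℝ}, 0 < ε → ∀ᶠ n : ℕ in atTop, M n ≤ ε * n := by
    intro ε hε
    obtain ⟨N, hN⟩ := eventually_atTop.1 <|
      (ha.eventually (gt_mem_nhds hε)).and (eventually_gt_atTop 0)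
    have hgrow : Tendsto (fun n : ℕ => ε * n) atTop atTop :=
      tendsto_natCast_atTop_atTop.const_mul_atTop hε
    filter_upwards [hgrow.eventually_ge_atTop (M N), eventually_ge_atTop N] with n hMN hn
    refine sup'_le _ _ fun k hk => ?_
    rcases le_total k N with hkN | hNk
    · exact (le_sup' a (mem_range_succ_iff.2 hkN)).trans hMN
    · have hk0 : (0 : ℝ) < k := by exact_mod_cast (hN k hNk).2
      calc a k ≤ ε * k := ((div_lt_iff₀ hk0).1 (hN k hNk).1).le
        _ ≤ ε * n := by gcongr; exact_mod_cast mem_range_succ_iff.1 hk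
  refine tendsto_order.2 ⟨fun b hb => ?_, fun b hb => ?_⟩
  · filter_upwards [(tendsto_const_div_atTop_nhds_zero_nat (a 0)).eventually (lt_mem_nhds hb)]
      with n hn
    exact hn.trans_le (div_le_div_of_nonneg_right (le_sup' a (mem_range.2 n.succ_pos))
      n.cast_nonneg)
  · filter_upwards [hM (half_pos hb), eventually_gt_atTop 0] with n hn hn0
    rw [div_lt_iff₀ (by exact_mod_cast hn0)]
    nlinarith [(Nat.cast_pos.2 hn0 : (0 : ℝ) < n)]

theorem tendsto_card_image_range_div {x : ℕ → ℤ} (hx : ∀ k, |x (k + 1) - x k| ≤ 1) {ℓ : ℝ}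
    (hℓ : Tendsto (fun n => (x n : ℝ) / n) atTop (𝓝 ℓ)) :
    Tendsto (fun n => (((range (n + 1)).image x).card : ℝ) / n) atTop (𝓝 |ℓ|) := by
  set a := fun k : ℕ => |(x k : ℝ) - ℓ * k|
  have ha : Tendsto (fun k => a k / k) atTop (𝓝 0) := by
    have : Tendsto (fun k => |(x k : ℝ) / k - ℓ|) atTop (𝓝 0) := by
      simpa using (hℓ.sub_const ℓ).abs
    refine this.congr' ?_
    filter_upwards [eventually_gt_atTop 0] with k hk
    have hk0 : (0 : ℝ) < k := by exact_mod_cast hk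
    rw [← abs_of_pos hk0, ← abs_div, sub_div, mul_div_cancel_right₀ _ hk0.ne', abs_of_pos hk0]
  have hlower : Tendsto (fun n => (|(x n : ℝ)| - |(x 0 : ℝ)|) / n) atTop (𝓝 |ℓ|) := by
    have := hℓ.abs.sub (tendsto_const_div_atTop_nhds_zero_nat |(x 0 : ℝ)|)
    simp only [sub_zero] at this
    refine this.congr fun n => ?_
    rw [sub_div, abs_div, Nat.abs_cast]
  have hupper : Tendsto (fun n => |ℓ| + 2 * ((range (n + 1)).sup' nonempty_range_add_one a / n)
      + 1 / n) atTop (𝓝 |ℓ|) := by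
    simpa using ((tendsto_sup'_range_div_atTop ha).const_mul 2).const_add |ℓ| |>.add
      tendsto_one_div_atTop_nhds_zero_nat
  refine tendsto_of_tendsto_of_tendsto_of_le_of_le' hlower hupper ?_ ?_ <;>
    filter_upwards [eventually_gt_atTop 0] with n hn <;>
    have hn0 : (0 : ℝ) < n := by exact_mod_cast hn
  · gcongr
    have : |x n| - |x 0| ≤ (((range (n + 1)).image x).card : ℤ) :=
      (abs_sub_abs_le_abs_sub (x n) (x 0)).trans (abs_sub_lt_card_image_range hx n).le
    exact_mod_cast this
  · rw [div_le_iff₀ hn0]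
    have := card_image_range_le (x := x) (n := n) (ℓ := ℓ)
      (E := (range (n + 1)).sup' nonempty_range_add_one a) fun k hk =>
      le_sup' a (mem_range_succ_iff.2 hk)
    field_simp
    linarith

section BirkhoffSum

variable {Ω : Type*} [MeasurableSpace Ω] {μ : Measure Ω} {T : Ω → Ω} {g : Ω → ℝ}

theorem MeasureTheory.MeasurePreserving.integrable_birkhoffSum (hT : MeasurePreserving T μ μ)
    (hg : Integrable g μ) (n : ℕ) : Integrable (birkhoffSum T g n) μ :=
  integrable_finsetSum _ fun k _ => (hT.iterate k).integrable_comp_of_integrable hg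

theorem measurable_birkhoffSum (hT : Measurable T) (hg : Measurable g) (n : ℕ) :
    Measurable (birkhoffSum T g n) :=
  Finset.measurable_sum _ fun k _ => hg.comp (hT.iterate k)

theorem MeasureTheory.MeasurePreserving.setIntegral_nonneg_of_exists_birkhoffSum_pos_le
    (hT : MeasurePreserving T μ μ) (hg : Measurable g) (hgi : Integrable g μ) (N : ℕ) :
    0 ≤ ∫ ω in {ω | ∃ n ≤ N, 0 < birkhoffSum T g n ω}, g ω ∂μ := by
  set Φ := fun ω => (range (N + 1)).sup' nonempty_range_add_one fun n => birkhoffSum T g n ω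
  have hΦ_nonneg : ∀ ω, 0 ≤ Φ ω := fun ω =>
    (birkhoffSum_zero T g ω).symm.trans_le (le_sup' (fun n => birkhoffSum T g n ω) (by simp))
  have hΦ_attained : ∀ ω, ∃ n ∈ range (N + 1), Φ ω = birkhoffSum T g n ω := fun ω =>
    exists_mem_eq_sup' _ _
  have hE : {ω | ∃ n ≤ N, 0 < birkhoffSum T g n ω} = {ω | 0 < Φ ω} := by
    ext ω
    simp [Φ, lt_sup'_iff]
  have hΦm : Measurable Φ :=
    measurable_range_sup'' fun n _ => measurable_birkhoffSum hT.measurable hg n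
  have hΦi : Integrable Φ μ := by
    refine (integrable_finsetSum (range (N + 1)) fun n _ =>
      (hT.integrable_birkhoffSum hgi n).abs).mono' hΦm.aestronglyMeasurable (ae_of_all _ ?_)
    intro ω
    obtain ⟨n, hn, hΦn⟩ := hΦ_attained ω
    rw [Real.norm_eq_abs, abs_of_nonneg (hΦ_nonneg ω), hΦn]
    exact (le_abs_self _).trans (single_le_sum (f := fun n => |birkhoffSum T g n ω|)
      (fun _ _ => abs_nonneg _) hn)
  -- on `{0 < Φ}` the maximum is attained at some `n ≥ 1`, and `S_n ω = g ω + S_{n-1} (T ω)`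
  have hkey : ∀ ω, Φ ω - Φ (T ω) ≤ {ω | 0 < Φ ω}.indicator g ω := by
    intro ω
    by_cases hω : 0 < Φ ω
    · rw [Set.indicator_of_mem (show ω ∈ {ω | 0 < Φ ω} from hω)]
      obtain ⟨n, hn, hΦn⟩ := hΦ_attained ω
      obtain ⟨m, rfl⟩ : ∃ m, n = m + 1 := Nat.exists_eq_add_one.2 <| Nat.pos_of_ne_zero <| by
        rintro rfl
        rw [hΦn, birkhoffSum_zero] at hω
        exact hω.false
      have : birkhoffSum T g m (T ω) ≤ Φ (T ω) :=
        le_sup' (fun n => birkhoffSum T g n (T ω)) (by simp only [mem_range] at hn ⊢; omega)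
      rw [hΦn, birkhoffSum_succ']
      linarith
    · rw [Set.indicator_of_notMem (show ω ∉ {ω | 0 < Φ ω} from hω)]
      linarith [hΦ_nonneg (T ω)]
  have hcomp : ∫ ω, Φ (T ω) ∂μ = ∫ ω, Φ ω ∂μ := by
    rw [← integral_map hT.measurable.aemeasurable (hT.map_eq ▸ hΦm.aestronglyMeasurable),
      hT.map_eq]
  have hΦTi : Integrable (fun ω => Φ (T ω)) μ := hT.integrable_comp_of_integrable hΦi
  rw [hE, ← integral_indicator (measurableSet_lt measurable_const hΦm)]
  calc (0 : ℝ) = ∫ ω, (Φ ω - Φ (T ω)) ∂μ := by rw [integral_sub hΦi hΦTi, hcomp, sub_self]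
    _ ≤ _ := integral_mono (hΦi.sub hΦTi)
        (hgi.indicator (measurableSet_lt measurable_const hΦm)) hkey

theorem MeasureTheory.MeasurePreserving.setIntegral_nonneg_of_exists_birkhoffSum_pos
    (hT : MeasurePreserving T μ μ) (hg : Measurable g) (hgi : Integrable g μ) :
    0 ≤ ∫ ω in {ω | ∃ n, 0 < birkhoffSum T g n ω}, g ω ∂μ := by
  have hU : {ω | ∃ n, 0 < birkhoffSum T g n ω} = ⋃ N, {ω | ∃ n ≤ N, 0 < birkhoffSum T g n ω} := by
    ext ω
    simp only [Set.mem_iUnion]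
    exact ⟨fun ⟨n, hn⟩ => ⟨n, n, le_rfl, hn⟩, fun ⟨_, n, _, hn⟩ => ⟨n, hn⟩⟩
  have hmeas : ∀ N, MeasurableSet {ω | ∃ n ≤ N, 0 < birkhoffSum T g n ω} := fun N => by
    have := measurable_birkhoffSum hT.measurable hg
    measurability
  rw [hU]
  refine ge_of_tendsto' (tendsto_setIntegral_of_monotone hmeas ?_ hgi.integrableOn)
    (hT.setIntegral_nonneg_of_exists_birkhoffSum_pos_le hg hgi)
  exact fun N N' h ω ⟨n, hn, hpos⟩ => ⟨n, hn.trans h, hpos⟩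

theorem frequently_mul_lt_of_abs_sub_le {u v : ℕ → ℝ} {a b C : ℝ} (hab : a < b)
    (huv : ∀ n, |u n - v n| ≤ C) (hv : ∃ᶠ n in atTop, b * n < v n) :
    ∃ᶠ n in atTop, a * n < u n := by
  have hgap : ∀ᶠ n : ℕ in atTop, C < (b - a) * n :=
    (tendsto_natCast_atTop_atTop.const_mul_atTop (sub_pos.2 hab)).eventually_gt_atTop C
  refine (hv.and_eventually hgap).mono fun n ⟨hn, hCn⟩ => ?_
  linarith [(abs_le.1 (huv n)).1]

theorem Ergodic.ae_eventually_birkhoffAverage_lt (hT : Ergodic T μ) [IsProbabilityMeasure μ]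
    (hg : Measurable g) {C : ℝ} (hgC : ∀ ω, |g ω| ≤ C) {q : ℝ} (hq : ∫ ω, g ω ∂μ < q) :
    ∀ᵐ ω ∂μ, ∀ᶠ n in atTop, birkhoffAverage ℝ T g n ω < q := by
  have hS := measurable_birkhoffSum hT.measurable hg
  -- `D` is the event `limsup S_n / n ≥ q`
  set D := {ω | ∀ r : ℚ, (r : ℝ) < q → ∃ᶠ n in atTop, r * n < birkhoffSum T g n ω}
  have hDm : MeasurableSet D := by
    simp only [D, frequently_atTop]
    measurability
  have hshift : ∀ ω n, |birkhoffSum T g n (T ω) - birkhoffSum T g n ω| ≤ 2 * C := fun ω n => by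
    rw [birkhoffSum_apply_sub_birkhoffSum]
    linarith [abs_sub (g (T^[n] ω)) (g ω), hgC (T^[n] ω), hgC ω]
  have hDinv : T ⁻¹' D = D := by
    ext ω
    refine ⟨fun h r hr => ?_, fun h r hr => ?_⟩ <;> obtain ⟨r', hrr', hr'q⟩ := exists_rat_btwn hr
    · exact frequently_mul_lt_of_abs_sub_le (by exact_mod_cast hrr')
        (fun n => abs_sub_comm (birkhoffSum T g n ω) _ ▸ hshift ω n) (h r' hr'q)
    · exact frequently_mul_lt_of_abs_sub_le (by exact_mod_cast hrr') (hshift ω) (h r' hr'q)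
  rcases hT.ae_mem_or_ae_notMem hDm hDinv with hD | hD
  · exfalso
    obtain ⟨r, hgr, hrq⟩ := exists_rat_btwn hq
    set h := fun ω => g ω - r
    have hgi : Integrable g μ := Integrable.of_bound hg.aestronglyMeasurable C (ae_of_all _ hgC)
    have hhi : Integrable h μ := hgi.sub (integrable_const _)
    have hSh : ∀ n ω, birkhoffSum T h n ω = birkhoffSum T g n ω - r * n := fun n ω => by
      simp [h, birkhoffSum, Finset.sum_sub_distrib, mul_comm]
    have hA : ∀ᵐ ω ∂μ, ω ∈ {ω | ∃ n, 0 < birkhoffSum T h n ω} := by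
      filter_upwards [hD] with ω hω
      obtain ⟨n, hn⟩ := (hω r hrq).exists
      exact ⟨n, by rw [hSh]; linarith⟩
    have := hT.toMeasurePreserving.setIntegral_nonneg_of_exists_birkhoffSum_pos (g := h)
      (hg.sub_const _) hhi
    rw [Measure.restrict_eq_self_of_ae_mem hA, integral_sub hgi (integrable_const _)] at this
    simp only [integral_const, probReal_univ, smul_eq_mul, one_mul] at this
    linarith
  · filter_upwards [hD] with ω hω
    simp only [D, Set.mem_ofPred_eq, not_forall, not_frequently, not_lt] at hω
    obtain ⟨r, hrq, hr⟩ := hω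
    filter_upwards [hr, eventually_gt_atTop 0] with n hn hn0
    have hn0' : (0 : ℝ) < n := by exact_mod_cast hn0
    rw [birkhoffAverage, smul_eq_mul, inv_mul_lt_iff₀ hn0']
    nlinarith

theorem Ergodic.ae_tendsto_birkhoffAverage (hT : Ergodic T μ) [IsProbabilityMeasure μ]
    (hg : Measurable g) {C : ℝ} (hgC : ∀ ω, |g ω| ≤ C) :
    ∀ᵐ ω ∂μ, Tendsto (fun n => birkhoffAverage ℝ T g n ω) atTop (𝓝 (∫ ω, g ω ∂μ)) := by
  have hupper : ∀ᵐ ω ∂μ, ∀ q : ℚ, ∫ ω, g ω ∂μ < q →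
      ∀ᶠ n in atTop, birkhoffAverage ℝ T g n ω < q :=
    ae_all_iff.2 fun q => eventually_imp_distrib_left.2 fun hq =>
      hT.ae_eventually_birkhoffAverage_lt hg hgC hq
  have hlower : ∀ᵐ ω ∂μ, ∀ q : ℚ, ∫ ω, -g ω ∂μ < q →
      ∀ᶠ n in atTop, birkhoffAverage ℝ T (-g) n ω < q :=
    ae_all_iff.2 fun q => eventually_imp_distrib_left.2 fun hq =>
      hT.ae_eventually_birkhoffAverage_lt hg.neg (fun ω => (abs_neg (g ω)).trans_le (hgC ω)) hq
  filter_upwards [hupper, hlower] with ω hω_upper hω_lower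
  refine tendsto_order.2 ⟨fun b hb => ?_, fun b hb => ?_⟩
  · obtain ⟨q, hbq, hq⟩ := exists_rat_btwn hb
    refine (hω_lower (-q) (by rw [integral_neg]; push_cast; linarith)).mono fun n hn => ?_
    rw [birkhoffAverage_neg, Pi.neg_apply, Pi.neg_apply, Rat.cast_neg] at hn
    linarith
  · obtain ⟨q, hq, hqb⟩ := exists_rat_btwn hb
    exact (hω_upper q hq).mono fun n hn => hn.trans hqb

end BirkhoffSum

/-- A stationary ergodic sequence `ξ` valued in `{-1,0,1}` is represented as
`ξ (n+1) = f ∘ T^[n]` for an ergodic measure-preserving map `T`. -/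
theorem stmt10 {Ω : Type*} [MeasurableSpace Ω] (μ : Measure Ω) [IsProbabilityMeasure μ]
    (T : Ω → Ω) (hT : Ergodic T μ)
    (f : Ω → ℤ) (hf : Measurable f)
    (hval : ∀ ω, f ω = -1 ∨ f ω = 0 ∨ f ω = 1)
    (ξ : ℕ → Ω → ℤ) (hξ : ∀ n ω, ξ (n + 1) ω = f (T^[n] ω))
    (X : ℕ → Ω → ℤ) (hX : ∀ n ω, X n ω = ∑ k ∈ Finset.range n, ξ (k + 1) ω)
    (R : ℕ → Ω → ℕ)
    (hR : ∀ n ω, R n ω = ((Finset.range (n + 1)).image (fun k => X k ω)).card) :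
    ∀ᵐ ω ∂μ, Tendsto (fun n : ℕ => (R n ω : ℝ) / n) atTop
      (nhds |∫ ω, (f ω : ℝ) ∂μ|) := by
  have hf_abs : ∀ ω, |(f ω : ℝ)| ≤ 1 := fun ω => by rcases hval ω with h | h | h <;> simp [h]
  filter_upwards [hT.ae_tendsto_birkhoffAverage (by fun_prop) hf_abs] with ω hω
  have hX_step : ∀ k, |X (k + 1) ω - X k ω| ≤ 1 := fun k => by
    rw [hX, hX, sum_range_succ, add_sub_cancel_left, hξ]
    rcases hval (T^[k] ω) with h | h | h <;> simp [h]
  have hX_lim : Tendsto (fun n => (X n ω : ℝ) / n) atTop (𝓝 (∫ ω, (f ω : ℝ) ∂μ)) := by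
    refine hω.congr fun n => ?_
    simp [birkhoffAverage, birkhoffSum, hX, hξ, div_eq_inv_mul]
  simpa only [hR] using tendsto_card_image_range_div hX_step hX_lim
end

section
/- Suppose (x_n) is an integer sequence with x_0 = 0, |x_{n+1} - x_n| ≤ 1 for all n, and there exists N such that n(ℓ - ε) ≤ x_n ≤ n(ℓ + ε) for all n > N, where 0 < ε < ℓ. Then for all sufficiently large n, ⌊n(ℓ - ε)⌋ ≤ r_n ≤ r_{N-1} + n(ℓ + ε), where r_n = card{x_0, ..., x_n}. -/
/-!
From time `N` on the walk is nonnegative, so apart from the values it takes before `N` (among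
them `0 = x 0`) it only visits integers in `(0, n (ℓ + ε)]`; this gives the upper bound. Since
its steps have size at most one, the walk cannot skip an integer, so it visits all of `[0, x n]`,
which has `x n + 1 ≥ n (ℓ - ε)` elements; this gives the lower bound.
-/

open Filter Finset

section UnitStepWalk

variable {x : ℕ → ℤ}

theorem Icc_subset_image_range_of_abs_sub_le_one (hx : ∀ n, |x (n + 1) - x n| ≤ 1) (n : ℕ) :
    Icc (x 0) (x n) ⊆ (range (n + 1)).image x := by
  induction n with
  | zero => simp
  | succ n ih =>
    intro v hv
    obtain ⟨hv₀, hvn⟩ := mem_Icc.mp hv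
    rcases le_or_gt v (x n) with hle | hgt
    · exact image_subset_image (range_subset_range.mpr (n + 1).le_succ)
        (ih (mem_Icc.mpr ⟨hv₀, hle⟩))
    · have hstep := (abs_le.mp (hx n)).2
      exact mem_image.mpr ⟨n + 1, self_mem_range_succ _, by omega⟩

theorem sub_add_one_le_card_image_range (hx : ∀ n, |x (n + 1) - x n| ≤ 1) (n : ℕ) :
    x n - x 0 + 1 ≤ #((range (n + 1)).image x) :=
  calc x n - x 0 + 1 ≤ (x n + 1 - x 0).toNat := by
        rw [add_sub_right_comm]; exact Int.self_le_toNat _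
    _ = #(Icc (x 0) (x n)) := by rw [Int.card_Icc]
    _ ≤ #((range (n + 1)).image x) := by
      exact_mod_cast card_le_card (Icc_subset_image_range_of_abs_sub_le_one hx n)

theorem card_image_range_le_add {m n M : ℕ} (hm : 0 < m)
    (hx : ∀ k, m ≤ k → k ≤ n → x 0 ≤ x k ∧ x k ≤ x 0 + M) :
    #((range (n + 1)).image x) ≤ #((range m).image x) + M := by
  have hsub : (range (n + 1)).image x ⊆ (range m).image x ∪ Ioc (x 0) (x 0 + M) := by
    intro v hv
    obtain ⟨k, hk, rfl⟩ := mem_image.mp hv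
    rcases lt_or_ge k m with hkm | hkm
    · exact mem_union_left _ (mem_image_of_mem x (mem_range.mpr hkm))
    · obtain ⟨h₀, hM⟩ := hx k hkm (Nat.lt_succ_iff.mp (mem_range.mp hk))
      rcases h₀.eq_or_lt with h | h
      · exact mem_union_left _ (mem_image.mpr ⟨0, mem_range.mpr hm, h⟩)
      · exact mem_union_right _ (mem_Ioc.mpr ⟨h, hM⟩)
  calc #((range (n + 1)).image x)
      ≤ #((range m).image x ∪ Ioc (x 0) (x 0 + M)) := card_le_card hsub
    _ ≤ #((range m).image x) + #(Ioc (x 0) (x 0 + M)) := card_union_le _ _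
    _ = #((range m).image x) + M := by simp [Int.card_Ioc]

end UnitStepWalk

theorem stmt12 (x : ℕ → ℤ) (h0 : x 0 = 0)
    (hinc : ∀ n, |x (n + 1) - x n| ≤ 1)
    (ℓ ε : ℝ) (hε : 0 < ε) (hεℓ : ε < ℓ) (N : ℕ)
    (hbound : ∀ n : ℕ, N < n → (n : ℝ) * (ℓ - ε) ≤ (x n : ℝ) ∧ (x n : ℝ) ≤ (n : ℝ) * (ℓ + ε)) :
    ∀ᶠ n : ℕ in atTop,
      (⌊(n : ℝ) * (ℓ - ε)⌋ : ℝ) ≤ (((Finset.range (n + 1)).image x).card : ℝ) ∧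
      (((Finset.range (n + 1)).image x).card : ℝ) ≤
        (((Finset.range (N - 1 + 1)).image x).card : ℝ) + (n : ℝ) * (ℓ + ε) := by
  have hpos : ∀ k, N < k → 0 < x k := fun k hk => by
    have hk₀ : (0 : ℝ) < k := by exact_mod_cast (Nat.zero_le N).trans_lt hk
    exact_mod_cast (mul_pos hk₀ (sub_pos.mpr hεℓ)).trans_le (hbound k hk).1
  have hxN : 0 ≤ x N := by
    have := hpos (N + 1) N.lt_succ_self
    have := (abs_le.mp (hinc N)).2
    omega
  have hℓε : 0 < ℓ + ε := by linarith
  have hgrowth : Tendsto (fun n : ℕ => (n : ℝ) * (ℓ + ε)) atTop atTop :=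
    tendsto_natCast_atTop_atTop.atTop_mul_const hℓε
  filter_upwards [eventually_gt_atTop N, hgrowth.eventually_ge_atTop (x N : ℝ)] with n hNn hxNn
  constructor
  · calc (⌊(n : ℝ) * (ℓ - ε)⌋ : ℝ) ≤ (n : ℝ) * (ℓ - ε) := Int.floor_le _
      _ ≤ x n := (hbound n hNn).1
      _ ≤ ((x n - x 0 + 1 : ℤ) : ℝ) := by simp [h0]
      _ ≤ #((range (n + 1)).image x) := by
          exact_mod_cast sub_add_one_le_card_image_range hinc n
  · have hmax : 0 ≤ (n : ℝ) * (ℓ + ε) := by positivity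
    have hrange :
        ∀ k, N - 1 + 1 ≤ k → k ≤ n → x 0 ≤ x k ∧ x k ≤ x 0 + ⌊(n : ℝ) * (ℓ + ε)⌋₊ := by
      intro k hNk hkn
      rw [h0, zero_add, Int.natCast_floor_eq_floor hmax, Int.le_floor]
      rcases (show N ≤ k by omega).eq_or_lt with rfl | hNk
      · exact ⟨hxN, hxNn⟩
      · exact ⟨(hpos k hNk).le, (hbound k hNk).2.trans (by gcongr)⟩
    calc (#((range (n + 1)).image x) : ℝ)
        ≤ #((range (N - 1 + 1)).image x) + ⌊(n : ℝ) * (ℓ + ε)⌋₊ := by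
          exact_mod_cast card_image_range_le_add (Nat.succ_pos _) hrange
      _ ≤ #((range (N - 1 + 1)).image x) + (n : ℝ) * (ℓ + ε) := by
          gcongr; exact Nat.floor_le hmax
end

section
/- Let (x_n) be an integer sequence with x_0 = 0, |x_{n+1} - x_n| ≤ 1, and x_n/n → 0. Then r_n/n → 0, where r_n = card{x_0, ..., x_n}. -/
/-!
The values `x 0, …, x n` lie in `[-M n, M n]` with `M n = max_{k ≤ n} |x k|`, so
`r n ≤ 2 M n + 1`, and the running maximum of a sequence that is `o(n)` is again `o(n)`.
-/

open Filter Topology Finset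

theorem card_image_le_two_mul_sup_natAbs_add_one {ι : Type*} (s : Finset ι) (f : ι → ℤ) :
    (s.image f).card ≤ 2 * s.sup (fun i => (f i).natAbs) + 1 := by
  set M := s.sup fun i => (f i).natAbs
  have hsub : s.image f ⊆ Icc (-(M : ℤ)) M := by
    simp only [subset_iff, mem_image, mem_Icc]
    rintro _ ⟨i, hi, rfl⟩
    have : (f i).natAbs ≤ M := le_sup (f := fun i => (f i).natAbs) hi
    omega
  calc (s.image f).card ≤ (Icc (-(M : ℤ)) M).card := card_le_card hsub
    _ = 2 * M + 1 := by rw [Int.card_Icc]; omega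

theorem sup_range_le_sup_range_add_mul (u : ℕ → ℕ) {N : ℕ} {c : ℝ} (hc : 0 ≤ c)
    (h : ∀ k > N, (u k : ℝ) ≤ c * k) (n : ℕ) :
    (((range (n + 1)).sup u : ℕ) : ℝ) ≤ ((range (N + 1)).sup u : ℕ) + c * n := by
  obtain ⟨k, hk, hmax⟩ :=
    exists_mem_eq_sup (range (n + 1)) (nonempty_range_iff.2 n.succ_ne_zero) u
  rw [hmax]
  rw [mem_range] at hk
  rcases le_or_gt k N with hkN | hkN
  · have hle : (u k : ℝ) ≤ ((range (N + 1)).sup u : ℕ) := by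
      exact_mod_cast le_sup (f := u) (mem_range.2 (Nat.lt_succ_of_le hkN))
    have : (0 : ℝ) ≤ c * n := by positivity
    linarith
  · have : (k : ℝ) ≤ n := by exact_mod_cast Nat.lt_succ_iff.1 hk
    nlinarith [h k hkN]

theorem tendsto_sup_range_div_of_tendsto_div {u : ℕ → ℕ}
    (hu : Tendsto (fun n => (u n : ℝ) / n) atTop (𝓝 0)) :
    Tendsto (fun n => (((range (n + 1)).sup u : ℕ) : ℝ) / n) atTop (𝓝 0) := by
  refine tendsto_order.2
    ⟨fun a ha => Eventually.of_forall fun n => ha.trans_le (by positivity), fun ε hε => ?_⟩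
  obtain ⟨N, hN⟩ := eventually_atTop.1 ((tendsto_order.1 hu).2 (ε / 2) (half_pos hε))
  set C : ℝ := (((range (N + 1)).sup u : ℕ) : ℝ)
  have hbound : ∀ n, (((range (n + 1)).sup u : ℕ) : ℝ) ≤ C + ε / 2 * n :=
    sup_range_le_sup_range_add_mul u (half_pos hε).le fun k hk => by
      have hk0 : (0 : ℝ) < k := by exact_mod_cast (Nat.zero_le N).trans_lt hk
      exact ((div_lt_iff₀ hk0).1 (hN k hk.le)).le
  filter_upwards [eventually_gt_atTop ⌈2 * C / ε⌉₊] with n hn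
  have hCn : 2 * C / ε < n := (Nat.le_ceil _).trans_lt (by exact_mod_cast hn)
  have hn0 : (0 : ℝ) < n := lt_of_le_of_lt (by positivity) hCn
  rw [div_lt_iff₀ hn0]
  rw [div_lt_iff₀ hε] at hCn
  linarith [hbound n]

theorem stmt14_general (x : ℕ → ℤ)
    (hlim : Tendsto (fun n : ℕ => (x n : ℝ) / n) atTop (nhds 0)) :
    Tendsto (fun n : ℕ => (((Finset.range (n + 1)).image x).card : ℝ) / n)
      atTop (nhds 0) := by
  set M : ℕ → ℕ := fun n => (range (n + 1)).sup fun k => (x k).natAbs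
  have habs : Tendsto (fun n => ((x n).natAbs : ℝ) / n) atTop (𝓝 0) := by
    simpa [Nat.cast_natAbs, abs_div] using hlim.abs
  have hM : Tendsto (fun n => (2 * M n + 1 : ℝ) / n) atTop (𝓝 0) := by
    simpa [add_div, mul_div_assoc] using
      ((tendsto_sup_range_div_of_tendsto_div habs).const_mul 2).add
        tendsto_one_div_atTop_nhds_zero_nat
  refine squeeze_zero (fun n => by positivity) (fun n => ?_) hM
  gcongr
  exact_mod_cast card_image_le_two_mul_sup_natAbs_add_one _ x

theorem stmt14 (x : ℕ → ℤ) (h0 : x 0 = 0)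
    (hinc : ∀ n, |x (n + 1) - x n| ≤ 1)
    (hlim : Tendsto (fun n : ℕ => (x n : ℝ) / n) atTop (nhds 0)) :
    Tendsto (fun n : ℕ => (((Finset.range (n + 1)).image x).card : ℝ) / n)
      atTop (nhds 0) :=
  stmt14_general x hlim
end

section
/- There exists a sequence (x_n) in ℤ² with x_0 = 0 and ‖x_{n+1} - x_n‖ ≤ 1 (sup norm or Euclidean with unit steps) such that all x_n are distinct (so r_n = n+1) while x_n/n → 0. In particular, the implication 'x_n/n → 0 implies r_n/n → 0' fails in dimension 2. -/
/-!
Walk through the quadrant `ℕ × ℕ` shell by shell: the `2k + 1` points of the shell `max a b = k`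
are visited at the times `k * k, …, k * k + 2k`, and the direction is reversed on each new shell
so that its first point is a king's move away from the last point of the previous one. The walk
is injective, yet at time `n` it is still in the square of side `√n`, so `x n / n → 0`.
-/

open Filter Topology

/-- The `i`-th point, `i ≤ 2k`, of the shell `max a b = k`. -/
def shellPoint (k i : ℕ) : ℕ × ℕ :=
  if k % 2 = 0 then
    if i ≤ k then (i, k) else (k, 2 * k - i)
  else
    if i ≤ k then (k, i) else (2 * k - i, k)

def shellIndex (p : ℕ × ℕ) : ℕ :=
  let k := max p.1 p.2
  if k % 2 = 0 then
    if p.2 = k then p.1 else 2 * k - p.2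
  else
    if p.1 = k then p.2 else 2 * k - p.1

lemma max_shellPoint {k i : ℕ} (hi : i ≤ 2 * k) :
    max (shellPoint k i).1 (shellPoint k i).2 = k := by
  unfold shellPoint
  split_ifs <;> dsimp only <;> omega

lemma shellIndex_shellPoint {k i : ℕ} (hi : i ≤ 2 * k) : shellIndex (shellPoint k i) = i := by
  unfold shellPoint shellIndex
  split_ifs <;> dsimp only <;> split_ifs <;> omega

lemma shellPoint_le {k i : ℕ} (hi : i ≤ 2 * k) :
    (shellPoint k i).1 ≤ k ∧ (shellPoint k i).2 ≤ k := by
  unfold shellPoint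
  split_ifs <;> dsimp only <;> omega

def KingAdj (p q : ℕ × ℕ) : Prop :=
  |(q.1 : ℤ) - p.1| ≤ 1 ∧ |(q.2 : ℤ) - p.2| ≤ 1

lemma kingAdj_shellPoint_succ {k i : ℕ} (hi : i < 2 * k) :
    KingAdj (shellPoint k i) (shellPoint k (i + 1)) := by
  unfold KingAdj shellPoint
  split_ifs <;> simp only [abs_le] <;> omega

lemma kingAdj_shellPoint_last (k : ℕ) :
    KingAdj (shellPoint k (2 * k)) (shellPoint (k + 1) 0) := by
  unfold KingAdj shellPoint
  split_ifs <;> simp only [abs_le] <;> omega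

def spiral (n : ℕ) : ℕ × ℕ :=
  shellPoint n.sqrt (n - n.sqrt * n.sqrt)

lemma exists_eq_mul_self_add (n : ℕ) : ∃ k i, i ≤ 2 * k ∧ n = k * k + i :=
  ⟨n.sqrt, n - n.sqrt * n.sqrt, by have := Nat.sqrt_le_add n; omega,
    by have := Nat.sqrt_le n; omega⟩

lemma spiral_mul_self_add {k i : ℕ} (hi : i ≤ 2 * k) : spiral (k * k + i) = shellPoint k i := by
  rw [spiral, Nat.sqrt_add_eq k (by omega), Nat.add_sub_cancel_left]

lemma spiral_injective : Function.Injective spiral := by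
  refine Function.LeftInverse.injective (g := fun p => max p.1 p.2 * max p.1 p.2 + shellIndex p)
    fun n => ?_
  obtain ⟨k, i, hi, rfl⟩ := exists_eq_mul_self_add n
  simp only [spiral_mul_self_add hi, max_shellPoint hi, shellIndex_shellPoint hi]

lemma kingAdj_spiral_succ (n : ℕ) : KingAdj (spiral n) (spiral (n + 1)) := by
  obtain ⟨k, i, hi, rfl⟩ := exists_eq_mul_self_add n
  rcases hi.lt_or_eq with hi | rfl
  · rw [add_assoc, spiral_mul_self_add hi.le, spiral_mul_self_add hi]
    exact kingAdj_shellPoint_succ hi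
  · have hlast : k * k + 2 * k + 1 = (k + 1) * (k + 1) + 0 := by ring
    rw [hlast, spiral_mul_self_add le_rfl, spiral_mul_self_add (Nat.zero_le _)]
    exact kingAdj_shellPoint_last k

lemma spiral_le_sqrt (n : ℕ) : (spiral n).1 ≤ n.sqrt ∧ (spiral n).2 ≤ n.sqrt :=
  shellPoint_le (by have := Nat.sqrt_le_add n; omega)

lemma tendsto_div_natCast_of_abs_le_sqrt {u : ℕ → ℝ} (hu : ∀ n, |u n| ≤ √n) :
    Tendsto (fun n : ℕ => u n / n) atTop (𝓝 0) := by
  have hsqrt : Tendsto (fun n : ℕ => √n / n) atTop (𝓝 0) := by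
    simp_rw [Real.sqrt_div_self', one_div]
    exact tendsto_inv_atTop_zero.comp (Real.tendsto_sqrt_atTop.comp tendsto_natCast_atTop_atTop)
  refine squeeze_zero_norm (fun n => ?_) hsqrt
  rw [norm_div, Real.norm_eq_abs, Real.norm_natCast]
  exact div_le_div_of_nonneg_right (hu n) n.cast_nonneg

lemma tendsto_div_natCast_of_le_natSqrt {u : ℕ → ℕ} (hu : ∀ n, u n ≤ n.sqrt) :
    Tendsto (fun n : ℕ => (u n : ℝ) / n) atTop (𝓝 0) :=
  tendsto_div_natCast_of_abs_le_sqrt fun n => by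
    rw [Nat.abs_cast]
    exact (Nat.cast_le.2 (hu n)).trans Real.nat_sqrt_le_real_sqrt

theorem stmt16 :
    ∃ x : ℕ → ℤ × ℤ, x 0 = 0 ∧
      (∀ n, |(x (n + 1)).1 - (x n).1| ≤ 1 ∧ |(x (n + 1)).2 - (x n).2| ≤ 1) ∧
      Function.Injective x ∧
      (∀ n, ((Finset.range (n + 1)).image x).card = n + 1) ∧
      Tendsto (fun n : ℕ => ((x n).1 : ℝ) / n) atTop (nhds 0) ∧
      Tendsto (fun n : ℕ => ((x n).2 : ℝ) / n) atTop (nhds 0) := by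
  set x : ℕ → ℤ × ℤ := Prod.map (↑) (↑) ∘ spiral
  have hinj : Function.Injective x :=
    (Nat.cast_injective.prodMap Nat.cast_injective).comp spiral_injective
  refine ⟨x, rfl, fun n => kingAdj_spiral_succ n, hinj, fun n => ?_, ?_, ?_⟩
  · rw [Finset.card_image_of_injective _ hinj, Finset.card_range]
  · simpa [x] using tendsto_div_natCast_of_le_natSqrt fun n => (spiral_le_sqrt n).1
  · simpa [x] using tendsto_div_natCast_of_le_natSqrt fun n => (spiral_le_sqrt n).2
end
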